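/- arXiv:2104.13510 — 8 statements merged into one kernel-verified Lean document; each statement's English description precedes it below -/
import Mathlib

section
/- Let Ω be a nonempty convex subset of ℝⁿ and let x̄ ∈ ℝⁿ. Then the following conditions are equivalent: (a) x̄ belongs to the relative interior ri(Ω); (b) x̄ ∈ Ω and for every x ∈ Ω with x ≠ x̄ there exists u ∈ Ω such that x̄ lies in the open segment (x, u); (c) x̄ ∈ Ω and cone(Ω − x̄) is a linear subspace of ℝⁿ; (d) x̄ ∈ Ω and the closure of cone(Ω − x̄) is a linear subspace of ℝⁿ; (e) x̄ ∈ Ω and the normal cone N(x̄; Ω) is a linear subspace of ℝⁿ. -/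
open Set Pointwise Filter Topology

/-- The cone generated by a set `A`: `{t • a | t ≥ 0, a ∈ A}`. -/
def coneGen {X : Type*} [AddCommGroup X] [Module ℝ X] (A : Set X) : Set X :=
  {y | ∃ t : ℝ, 0 ≤ t ∧ ∃ a ∈ A, y = t • a}

/-- A set is a linear subspace if it is the carrier of a submodule. -/
def IsLinSubspace {X : Type*} [AddCommGroup X] [Module ℝ X] (s : Set X) : Prop :=
  ∃ L : Submodule ℝ X, (L : Set X) = s

/-- Intrinsic relative interior. -/
def iri {X : Type*} [AddCommGroup X] [Module ℝ X] (Ω : Set X) : Set X :=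
  {x ∈ Ω | IsLinSubspace (coneGen ((fun y => y - x) '' Ω))}

/-- Quasi-relative interior. -/
def qri {X : Type*} [AddCommGroup X] [Module ℝ X] [TopologicalSpace X] (Ω : Set X) : Set X :=
  {x ∈ Ω | IsLinSubspace (closure (coneGen ((fun y => y - x) '' Ω)))}

/-- Relative interior in a topological vector space. -/
def ri {X : Type*} [AddCommGroup X] [Module ℝ X] [TopologicalSpace X] (Ω : Set X) : Set X :=
  {x ∈ Ω | ∃ V ∈ nhds x, V ∩ closure ((affineSpan ℝ Ω : Set X)) ⊆ Ω}

/-- Normal cone (functional-analytic version), a subset of the topological dual. -/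
def normalCone {X : Type*} [AddCommGroup X] [Module ℝ X] [TopologicalSpace X]
    (Ω : Set X) (xb : X) : Set (X →L[ℝ] ℝ) :=
  {f | ∀ x ∈ Ω, f (x - xb) ≤ 0}

/-! Write `K = cone(Ω - x̄)`. For convex `Ω` this is a convex cone, so it is a subspace iff it is
closed under negation, and `-(x - x̄) ∈ K` says exactly that the segment from `x` through `x̄`
can be prolonged beyond `x̄` inside `Ω`: this is (b) ⟺ (c), and (a) ⟹ (b) is such a prolongation
inside a relative neighbourhood of `x̄`. The line-segment principle (`x ∈ ri Ω`, `y ∈ cl Ω` give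
`]x, y] ⊆ ri Ω`), together with `ri Ω ≠ ∅` in finite dimensions, yields (b) ⟹ (a). If `cl K`
is a subspace, `z ∈ ri K` and `w ∈ cl K`, the principle puts `w`, the midpoint of `z` and
`2w - z ∈ cl K`, into `K`; hence (d) ⟹ (c). Finally `N(x̄; Ω)` is minus the dual cone
of `cl K`, and by the bipolar theorem a closed convex cone is a subspace iff its dual cone is:
(d) ⟺ (e). -/

open AffineMap

section Module

variable {X : Type*} [AddCommGroup X] [Module ℝ X]

theorem mem_openSegment_iff_sub_eq_smul_sub {x y z : X} :
    z ∈ openSegment ℝ x y ↔ ∃ c : ℝ, 0 < c ∧ z - x = c • (y - z) := by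
  constructor
  · rintro ⟨a, b, ha, hb, hab, rfl⟩
    refine ⟨b / a, div_pos hb ha, ?_⟩
    obtain rfl : b = 1 - a := by linarith
    match_scalars <;> field_simp <;> ring
  · rintro ⟨c, hc, h⟩
    refine ⟨1 / (1 + c), c / (1 + c), by positivity, by positivity, by field_simp, ?_⟩
    have hz : z = (1 + c)⁻¹ • (x + c • y) := by
      rw [eq_inv_smul_iff₀ (by positivity)]
      linear_combination (norm := module) h
    rw [hz]; match_scalars <;> field_simp

theorem Convex.image_sub_const {s : Set X} (hs : Convex ℝ s) (z : X) :
    Convex ℝ ((fun y => y - z) '' s) := by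
  simpa only [neg_add_eq_sub] using hs.translate (-z)

theorem coneGen_smul_mem {A : Set X} {c : ℝ} (hc : 0 ≤ c) {y : X} (hy : y ∈ coneGen A) :
    c • y ∈ coneGen A :=
  let ⟨t, ht, a, ha, h⟩ := hy
  ⟨c * t, mul_nonneg hc ht, a, ha, by rw [h, smul_smul]⟩

theorem coneGen_add_mem {A : Set X} (hA : Convex ℝ A) {y z : X} (hy : y ∈ coneGen A)
    (hz : z ∈ coneGen A) : y + z ∈ coneGen A := by
  obtain ⟨s, hs, a, ha, rfl⟩ := hy
  obtain ⟨t, ht, b, hb, rfl⟩ := hz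
  rcases hs.eq_or_lt with rfl | hs
  · exact ⟨t, ht, b, hb, by simp⟩
  rcases ht.eq_or_lt with rfl | ht
  · exact ⟨s, hs.le, a, ha, by simp⟩
  obtain ⟨c, hc, d, hd, hcd⟩ := (ConvexCone.mem_hull_of_convex hA).1 <|
    (ConvexCone.hull ℝ A).add_mem ((ConvexCone.mem_hull_of_convex hA).2 ⟨s, hs, a, ha, rfl⟩)
      ((ConvexCone.mem_hull_of_convex hA).2 ⟨t, ht, b, hb, rfl⟩)
  exact ⟨c, hc.le, d, hd, hcd.symm⟩

theorem convex_coneGen {A : Set X} (hA : Convex ℝ A) : Convex ℝ (coneGen A) :=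
  fun _ hy _ hz _ _ hp hq _ =>
    coneGen_add_mem hA (coneGen_smul_mem hp hy) (coneGen_smul_mem hq hz)

theorem coneGen_eq_hull {A : Set X} (hA : Convex ℝ A) (hne : A.Nonempty) :
    coneGen A = PointedCone.hull ℝ A := by
  refine subset_antisymm ?_ fun y hy => ?_
  · rintro _ ⟨t, ht, a, ha, rfl⟩
    exact (PointedCone.hull ℝ A).smul_mem ht (PointedCone.subset_hull ha)
  induction hy using Submodule.span_induction with
  | mem a ha => exact ⟨1, zero_le_one, a, ha, (one_smul ℝ a).symm⟩
  | zero => exact ⟨0, le_rfl, hne.some, hne.some_mem, (zero_smul ℝ _).symm⟩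
  | add y z _ _ hy hz => exact coneGen_add_mem hA hy hz
  | smul c y _ hy => exact coneGen_smul_mem c.2 hy

theorem PointedCone.isLinSubspace_iff (C : PointedCone ℝ X) :
    IsLinSubspace (C : Set X) ↔ ∀ x ∈ C, -x ∈ C := by
  refine ⟨?_, fun h => ⟨C.lineal, ?_⟩⟩
  · rintro ⟨L, hL⟩ x hx
    rw [← SetLike.mem_coe, ← hL] at hx ⊢
    exact L.neg_mem hx
  · ext x
    simpa using h x

theorem isLinSubspace_neg_iff {s : Set X} : IsLinSubspace (-s) ↔ IsLinSubspace s := by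
  refine ⟨fun ⟨L, hL⟩ => ⟨L, ?_⟩, fun ⟨L, hL⟩ => ⟨L, ?_⟩⟩
  · rw [← neg_neg s, ← hL, Submodule.neg_coe]
  · rw [← hL, Submodule.neg_coe]

theorem Convex.isLinSubspace_coneGen_iff {A : Set X} (hA : Convex ℝ A) (hne : A.Nonempty) :
    IsLinSubspace (coneGen A) ↔ ∀ a ∈ A, -a ∈ coneGen A := by
  rw [coneGen_eq_hull hA hne, PointedCone.isLinSubspace_iff]
  refine ⟨fun h a ha => h a (PointedCone.subset_hull ha), fun h k hk => ?_⟩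
  induction hk using Submodule.span_induction with
  | mem a ha => exact h a ha
  | zero => simp
  | add y z _ _ hy hz => rw [neg_add]; exact add_mem hy hz
  | smul c y _ hy => simpa [smul_neg] using Submodule.smul_mem _ c hy

theorem neg_sub_mem_coneGen_sub_iff {Ω : Set X} {x xb : X} (hx : x ≠ xb) :
    -(x - xb) ∈ coneGen ((fun y => y - xb) '' Ω) ↔ ∃ u ∈ Ω, xb ∈ openSegment ℝ x u := by
  simp only [mem_openSegment_iff_sub_eq_smul_sub, neg_sub]
  constructor
  · rintro ⟨t, ht, _, ⟨u, hu, rfl⟩, h⟩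
    refine ⟨u, hu, t, ht.lt_of_ne ?_, h⟩
    rintro rfl
    exact hx (sub_eq_zero.1 (by simpa using h)).symm
  · rintro ⟨u, hu, c, hc, h⟩
    exact ⟨c, hc.le, u - xb, mem_image_of_mem _ hu, h⟩

theorem Convex.isLinSubspace_coneGen_sub_iff {Ω : Set X} (hΩ : Convex ℝ Ω) {xb : X}
    (hxb : xb ∈ Ω) : IsLinSubspace (coneGen ((fun y => y - xb) '' Ω)) ↔
      ∀ x ∈ Ω, x ≠ xb → ∃ u ∈ Ω, xb ∈ openSegment ℝ x u := by
  rw [(hΩ.image_sub_const xb).isLinSubspace_coneGen_iff ⟨_, mem_image_of_mem _ hxb⟩,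
    forall_mem_image]
  refine forall₂_congr fun x _ => ?_
  obtain rfl | hx := eq_or_ne x xb
  · exact iff_of_true ⟨0, le_rfl, _, mem_image_of_mem _ hxb, by simp⟩ fun h => (h rfl).elim
  · simp only [neg_sub_mem_coneGen_sub_iff hx, ne_eq, hx, not_false_eq_true, forall_const]

end Module

section TopologicalVectorSpace

variable {X : Type*} [AddCommGroup X] [Module ℝ X] [TopologicalSpace X] [IsTopologicalAddGroup X]
  [ContinuousSMul ℝ X] {s : Set X}

theorem AffineSubspace.lineMap_mem_closure {Q : AffineSubspace ℝ X} {p w : X} (hp : p ∈ Q)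
    (hw : w ∈ closure (Q : Set X)) (t : ℝ) : lineMap p w t ∈ closure (Q : Set X) :=
  map_mem_closure (f := fun w => lineMap p w t) (by fun_prop) hw fun _ hq =>
    AffineMap.lineMap_mem t hp hq

theorem IsLinSubspace.closure {t : Set X} (h : IsLinSubspace t) : IsLinSubspace (closure t) :=
  let ⟨L, hL⟩ := h
  ⟨L.topologicalClosure, by rw [Submodule.topologicalClosure_coe, hL]⟩

theorem Convex.combo_ri_closure_mem_ri (hs : Convex ℝ s) {x y : X} (hx : x ∈ ri s)
    (hy : y ∈ closure s) {a b : ℝ} (ha : 0 < a) (hb : 0 ≤ b) (hab : a + b = 1) :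
    a • x + b • y ∈ ri s := by
  obtain ⟨hxs, V, hV, hVs⟩ := hx
  obtain ⟨U, hUV, hU, hxU⟩ := mem_nhds_iff.1 hV
  have hys : closure s ⊆ closure (affineSpan ℝ s : Set X) := closure_mono (subset_affineSpan ℝ s)
  -- Pick `y' ∈ s` so close to `y` that the homothety `φ` with centre `y'` and ratio `a⁻¹` sends
  -- `a • x + b • y` into `U`; then `φ⁻¹' U` works, since `w = a • φ w + b • y'`.
  have hg : Tendsto (fun y' => x + (b / a) • (y - y')) (𝓝 y) (𝓝 x) := by
    simpa using ((by fun_prop : Continuous fun y' => x + (b / a) • (y - y')).tendsto y)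
  obtain ⟨y', hy'V, hy's⟩ := mem_closure_iff_nhds.mp hy _ (hg (hU.mem_nhds hxU))
  set φ : X → X := fun w => lineMap y' w a⁻¹
  have hφz : φ (a • x + b • y) = x + (b / a) • (y - y') := by
    obtain rfl : b = 1 - a := by linarith
    simp only [φ, lineMap_apply_module]
    match_scalars <;> field_simp
    ring
  have hφU : φ ⁻¹' U ∈ 𝓝 (a • x + b • y) :=
    ((by fun_prop : Continuous φ).isOpen_preimage U hU).mem_nhds (by rwa [mem_preimage, hφz])
  have hφs : φ ⁻¹' U ∩ closure (affineSpan ℝ s : Set X) ⊆ s := by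
    rintro w ⟨hwU, hwA⟩
    have hφw : φ w ∈ s :=
      hVs ⟨hUV hwU, AffineSubspace.lineMap_mem_closure (subset_affineSpan ℝ s hy's) hwA _⟩
    have hw : a • φ w + b • y' = w := by
      obtain rfl : b = 1 - a := by linarith
      simp only [φ, lineMap_apply_module]
      match_scalars <;> field_simp
      ring
    exact hw ▸ hs hφw hy's ha.le hb hab
  have hzA : a • x + b • y ∈ closure (affineSpan ℝ s : Set X) := by
    convert AffineSubspace.lineMap_mem_closure (subset_affineSpan ℝ s hxs) (hys hy) b using 1
    rw [lineMap_apply_module, ← hab, add_sub_cancel_right]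
  exact ⟨hφs ⟨mem_of_mem_nhds hφU, hzA⟩, _, hφU, hφs⟩

theorem exists_mem_openSegment_of_mem_ri {x xb : X} (hxb : xb ∈ ri s) (hx : x ∈ s) :
    ∃ u ∈ s, xb ∈ openSegment ℝ x u := by
  obtain ⟨hxbs, V, hV, hVs⟩ := hxb
  have hcurve : Tendsto (fun η : ℝ => lineMap x xb (1 + η)) (𝓝[>] 0) (𝓝 xb) := by
    have := ((by fun_prop : Continuous fun η : ℝ => lineMap x xb (1 + η)).tendsto 0)
    simpa using this.mono_left nhdsWithin_le_nhds
  obtain ⟨η, hηV, hη⟩ := ((hcurve.eventually_mem hV).and self_mem_nhdsWithin).exists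
  have hA : lineMap x xb (1 + η) ∈ affineSpan ℝ s :=
    AffineMap.lineMap_mem _ (subset_affineSpan ℝ s hx) (subset_affineSpan ℝ s hxbs)
  refine ⟨_, hVs ⟨hηV, subset_closure hA⟩,
    mem_openSegment_iff_sub_eq_smul_sub.2 ⟨η⁻¹, inv_pos.2 hη, ?_⟩⟩
  rw [lineMap_apply_module]
  match_scalars <;> field_simp <;> ring

end TopologicalVectorSpace

section FiniteDimensional

variable {E : Type*} [NormedAddCommGroup E] [NormedSpace ℝ E] [FiniteDimensional ℝ E] {s : Set E}

theorem intrinsicInterior_subset_ri : intrinsicInterior ℝ s ⊆ ri s := by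
  rintro _ ⟨y, hy, rfl⟩
  obtain ⟨V, hV, hVs⟩ := mem_nhds_subtype _ _ _ |>.1 (mem_interior_iff_mem_nhds.1 hy)
  refine ⟨hVs (show (y : E) ∈ V from mem_of_mem_nhds hV), V, hV, ?_⟩
  rw [(affineSpan ℝ s).closed_of_finiteDimensional.closure_eq]
  exact fun w ⟨hwV, hwA⟩ => hVs (show (⟨w, hwA⟩ : affineSpan ℝ s) ∈ Subtype.val ⁻¹' V from hwV)

theorem Set.Nonempty.ri (hne : s.Nonempty) (hs : Convex ℝ s) : (ri s).Nonempty :=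
  (hne.intrinsicInterior hs).mono intrinsicInterior_subset_ri

theorem Convex.isLinSubspace_of_isLinSubspace_closure (hs : Convex ℝ s)
    (h : IsLinSubspace (closure s)) : IsLinSubspace s := by
  obtain ⟨L, hL⟩ := h
  obtain ⟨z, hz⟩ := (closure_nonempty_iff.1 ⟨0, hL ▸ L.zero_mem⟩).ri hs
  refine ⟨L, (subset_closure.trans hL.symm.subset).antisymm' fun w hw => ?_⟩
  have hzL : z ∈ L := hL.symm.subset (subset_closure hz.1)
  have hw' : (2 : ℝ) • w - z ∈ closure s := hL.subset (L.sub_mem (L.smul_mem 2 hw) hzL)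
  have hmid := hs.combo_ri_closure_mem_ri hz hw' (a := 1 / 2) (b := 1 / 2) (by norm_num)
    (by norm_num) (by norm_num)
  rw [show (1 / 2 : ℝ) • z + (1 / 2 : ℝ) • ((2 : ℝ) • w - z) = w by module] at hmid
  exact hmid.1

end FiniteDimensional

section InnerProductSpace

open scoped RealInnerProductSpace

variable {H : Type*} [NormedAddCommGroup H] [InnerProductSpace ℝ H] [CompleteSpace H]

namespace ProperCone

theorem innerDual_closure (s : Set H) : innerDual (closure s) = innerDual s :=
  le_antisymm (innerDual_le_innerDual subset_closure) fun y hy _ hx =>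
    closure_minimal (t := {x | 0 ≤ ⟪x, y⟫}) (fun _ hx => hy hx)
      (isClosed_le continuous_const (by fun_prop)) hx

theorem innerDual_hull (s : Set H) : innerDual (PointedCone.hull ℝ s : Set H) = innerDual s :=
  ClosedSubmodule.toSubmodule_injective <| by
    simp only [innerDual_toSubmodule, PointedCone.dual_hull]

theorem coe_innerDual_submodule (L : Submodule ℝ H) : (innerDual (L : Set H) : Set H) = Lᗮ := by
  ext y
  simp only [SetLike.mem_coe, mem_innerDual, Submodule.mem_orthogonal]
  refine ⟨fun h u hu => le_antisymm ?_ (h hu), fun h u hu => (h u hu).ge⟩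
  simpa [inner_neg_left] using h (L.neg_mem hu)

theorem isLinSubspace_innerDual_iff (C : ProperCone ℝ H) :
    IsLinSubspace (innerDual (C : Set H) : Set H) ↔ IsLinSubspace (C : Set H) := by
  refine ⟨fun ⟨M, hM⟩ => ⟨Mᗮ, ?_⟩, fun ⟨L, hL⟩ => ⟨Lᗮ, by rw [← hL, coe_innerDual_submodule]⟩⟩
  rw [← coe_innerDual_submodule, hM, innerDual_innerDual]

end ProperCone

theorem Convex.isLinSubspace_polar_iff {A : Set H} (hA : Convex ℝ A) (hne : A.Nonempty) :
    IsLinSubspace {v : H | ∀ a ∈ A, ⟪v, a⟫ ≤ 0} ↔ IsLinSubspace (closure (coneGen A)) := by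
  have hpolar : {v : H | ∀ a ∈ A, ⟪v, a⟫ ≤ 0} = -(ProperCone.innerDual A : Set H) := by
    ext v
    simp [real_inner_comm, inner_neg_right]
  rw [hpolar, isLinSubspace_neg_iff, ← ProperCone.innerDual_hull, ← ProperCone.innerDual_closure,
    coneGen_eq_hull hA hne]
  exact ProperCone.isLinSubspace_innerDual_iff (Submodule.closure (PointedCone.hull ℝ A))

end InnerProductSpace

theorem relative_interior_characterizations_general {n : ℕ} (Ω : Set (EuclideanSpace ℝ (Fin n)))
    (hconv : Convex ℝ Ω) (xb : EuclideanSpace ℝ (Fin n)) :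
    List.TFAE [
      xb ∈ ri Ω,
      xb ∈ Ω ∧ ∀ x ∈ Ω, x ≠ xb → ∃ u ∈ Ω, xb ∈ openSegment ℝ x u,
      xb ∈ Ω ∧ IsLinSubspace (coneGen ((fun y => y - xb) '' Ω)),
      xb ∈ Ω ∧ IsLinSubspace (closure (coneGen ((fun y => y - xb) '' Ω))),
      xb ∈ Ω ∧ IsLinSubspace {v : EuclideanSpace ℝ (Fin n) |
        ∀ x ∈ Ω, (inner ℝ v (x - xb) : ℝ) ≤ 0} ] := by
  have hS := hconv.image_sub_const xb
  tfae_have 1 → 2 := fun h => ⟨h.1, fun _ hx _ => exists_mem_openSegment_of_mem_ri h hx⟩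
  tfae_have 2 → 1 := by
    rintro ⟨hxb, h⟩
    obtain ⟨z, hz⟩ := Set.Nonempty.ri ⟨xb, hxb⟩ hconv
    obtain rfl | hzxb := eq_or_ne z xb
    · exact hz
    obtain ⟨u, hu, a, b, ha, hb, hab, rfl⟩ := h z hz.1 hzxb
    exact hconv.combo_ri_closure_mem_ri hz (subset_closure hu) ha hb.le hab
  tfae_have 2 ↔ 3 := and_congr_right fun hxb => (hconv.isLinSubspace_coneGen_sub_iff hxb).symm
  tfae_have 3 → 4 := fun ⟨hxb, h⟩ => ⟨hxb, h.closure⟩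
  tfae_have 4 → 3 := fun ⟨hxb, h⟩ =>
    ⟨hxb, (convex_coneGen hS).isLinSubspace_of_isLinSubspace_closure h⟩
  tfae_have 4 ↔ 5 := and_congr_right fun hxb => by
    rw [← hS.isLinSubspace_polar_iff ⟨_, mem_image_of_mem _ hxb⟩]
    simp only [forall_mem_image]
  tfae_finish

/-- characterizations of the relative interior of a nonempty convex set in ℝⁿ. -/
theorem relative_interior_characterizations {n : ℕ} (Ω : Set (EuclideanSpace ℝ (Fin n)))
    (hne : Ω.Nonempty) (hconv : Convex ℝ Ω) (xb : EuclideanSpace ℝ (Fin n)) :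
    List.TFAE [
      xb ∈ ri Ω,
      xb ∈ Ω ∧ ∀ x ∈ Ω, x ≠ xb → ∃ u ∈ Ω, xb ∈ openSegment ℝ x u,
      xb ∈ Ω ∧ IsLinSubspace (coneGen ((fun y => y - xb) '' Ω)),
      xb ∈ Ω ∧ IsLinSubspace (closure (coneGen ((fun y => y - xb) '' Ω))),
      xb ∈ Ω ∧ IsLinSubspace {v : EuclideanSpace ℝ (Fin n) |
        ∀ x ∈ Ω, (inner ℝ v (x - xb) : ℝ) ≤ 0} ] :=
  relative_interior_characterizations_general Ω hconv xb
end

section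
/- Let Ω be a nonempty convex subset of a locally convex topological vector space X, and let x̄ ∈ Ω. Then x̄ ∈ qri(Ω) if and only if the normal cone N(x̄; Ω) is a linear subspace of X*. -/
open Set Pointwise Filter Topology

/-! With `T` the closure of `cone (Ω - x̄)`, the normal cone `N(x̄; Ω)` is the polar of the closed
convex cone `T`. A convex cone is a linear subspace iff it is symmetric, and by Farkas' lemma
(Hahn–Banach separation of a point from a closed convex cone) `T` is symmetric iff its polar is. -/

lemma PointedCone.isLinSubspace_iff_neg_mem {E : Type*} [AddCommGroup E] [Module ℝ E]
    (C : PointedCone ℝ E) : IsLinSubspace (C : Set E) ↔ ∀ x ∈ C, -x ∈ C := by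
  constructor
  · rintro ⟨L, hL⟩ x hx
    rw [← SetLike.mem_coe, ← hL] at hx ⊢
    exact L.neg_mem hx
  · exact fun h ↦ ⟨C.lineal, by ext x; simpa using h x⟩

section coneGen

variable {X : Type*} [AddCommGroup X] [Module ℝ X] {A : Set X}

lemma subset_coneGen : A ⊆ coneGen A :=
  fun a ha ↦ ⟨1, zero_le_one, a, ha, (one_smul ℝ a).symm⟩

lemma add_mem_coneGen (hA : Convex ℝ A) {x y : X} (hx : x ∈ coneGen A) (hy : y ∈ coneGen A) :
    x + y ∈ coneGen A := by
  obtain ⟨s, hs, a, ha, rfl⟩ := hx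
  obtain ⟨t, ht, b, hb, rfl⟩ := hy
  rcases (add_nonneg hs ht).eq_or_lt with hst | hst
  · obtain ⟨rfl, rfl⟩ : s = 0 ∧ t = 0 := ⟨by linarith, by linarith⟩
    exact ⟨0, le_rfl, a, ha, by simp⟩
  · refine ⟨s + t, hst.le, _, convex_iff_div.1 hA ha hb hs ht hst, ?_⟩
    simp only [smul_add, smul_smul, mul_div_cancel₀ _ hst.ne']

variable (A) in
def pointedConeGen (hA : Convex ℝ A) (hne : A.Nonempty) : PointedCone ℝ X where
  carrier := coneGen A
  add_mem' := add_mem_coneGen hA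
  zero_mem' := by
    obtain ⟨a, ha⟩ := hne
    exact ⟨0, le_rfl, a, ha, (zero_smul ℝ a).symm⟩
  smul_mem' := by
    rintro c _ ⟨t, ht, a, ha, rfl⟩
    exact ⟨c * t, mul_nonneg c.2 ht, a, ha, (mul_smul (c : ℝ) t a).symm⟩

variable [TopologicalSpace X] [ContinuousAdd X] [ContinuousConstSMul ℝ X]

variable (A) in
def closedConeGen (hA : Convex ℝ A) (hne : A.Nonempty) : ProperCone ℝ X where
  toSubmodule := (pointedConeGen A hA hne).closure
  isClosed' := isClosed_closure

lemma coe_closedConeGen (hA : Convex ℝ A) (hne : A.Nonempty) :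
    (closedConeGen A hA hne : Set X) = closure (coneGen A) := rfl

end coneGen

section polar

variable {X : Type*} [AddCommGroup X] [Module ℝ X] [TopologicalSpace X]

variable (X) in
def polarCone (s : Set X) : PointedCone ℝ (X →L[ℝ] ℝ) where
  carrier := {f | ∀ x ∈ s, f x ≤ 0}
  add_mem' hf hg x hx := add_nonpos (hf x hx) (hg x hx)
  zero_mem' _ _ := le_rfl
  smul_mem' c _ hf x hx := smul_nonpos_of_nonneg_of_nonpos c.2 (hf x hx)

lemma mem_polarCone {s : Set X} {f : X →L[ℝ] ℝ} : f ∈ polarCone X s ↔ ∀ x ∈ s, f x ≤ 0 :=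
  Iff.rfl

lemma polarCone_closure_coneGen (A : Set X) : polarCone X (closure (coneGen A)) = polarCone X A := by
  ext f
  refine ⟨fun hf x hx ↦ hf x (subset_closure (subset_coneGen hx)), fun hf ↦ ?_⟩
  refine closure_minimal ?_ (isClosed_le f.continuous continuous_const)
  rintro _ ⟨t, ht, a, ha, rfl⟩
  exact (map_smul f t a).trans_le (smul_nonpos_of_nonneg_of_nonpos ht (hf a ha))

lemma normalCone_eq_polarCone (Ω : Set X) (xb : X) :
    normalCone Ω xb = polarCone X ((fun y ↦ y - xb) '' Ω) := by
  ext f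
  simp [normalCone, mem_polarCone]

end polar

lemma ProperCone.neg_mem_iff_neg_mem_polarCone {X : Type*} [AddCommGroup X] [Module ℝ X]
    [TopologicalSpace X] [IsTopologicalAddGroup X] [ContinuousSMul ℝ X] [LocallyConvexSpace ℝ X]
    (C : ProperCone ℝ X) :
    (∀ x ∈ C, -x ∈ C) ↔ ∀ f ∈ polarCone X C, -f ∈ polarCone X C := by
  constructor
  · intro hC f hf x hx
    simpa using hf _ (hC x hx)
  · intro hpolar x hx
    by_contra hnx
    obtain ⟨f, hfC, hfx⟩ := C.hyperplane_separation_point hnx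
    have hf : -f ∈ polarCone X C := fun y hy ↦ neg_nonpos.2 (hfC y hy)
    have hfx_nonpos : f x ≤ 0 := by simpa using hpolar _ hf x hx
    rw [map_neg] at hfx
    linarith [hfC x hx]

/-- `xb ∈ qri Ω` iff the normal cone `N(xb; Ω)` is a linear subspace of `X*`. -/
theorem qri_iff_normalCone_subspace {X : Type*} [AddCommGroup X] [Module ℝ X]
    [TopologicalSpace X] [IsTopologicalAddGroup X] [ContinuousSMul ℝ X]
    [LocallyConvexSpace ℝ X]
    (Ω : Set X) (hne : Ω.Nonempty) (hconv : Convex ℝ Ω) (xb : X) (hxb : xb ∈ Ω) :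
    xb ∈ qri Ω ↔ IsLinSubspace (normalCone Ω xb) := by
  have hD : Convex ℝ ((fun y ↦ y - xb) '' Ω) := by
    simpa [sub_eq_neg_add] using hconv.translate (-xb)
  let T := closedConeGen _ hD (hne.image _)
  have hqri : xb ∈ qri Ω ↔ IsLinSubspace (T : Set X) := and_iff_right hxb
  have hN : normalCone Ω xb = polarCone X T := by
    rw [coe_closedConeGen, polarCone_closure_coneGen, normalCone_eq_polarCone]
  rw [hqri, hN]
  exact (PointedCone.isLinSubspace_iff_neg_mem (T : PointedCone ℝ X)).trans
    (T.neg_mem_iff_neg_mem_polarCone.trans (PointedCone.isLinSubspace_iff_neg_mem _).symm)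
end

section
/- Let X = ℓ² and let Ω := {x = (x_k) ∈ ℓ² | Σ_{k=1}^∞ |x_k| ≤ 1} (the ℓ¹-unit ball viewed as a subset of ℓ²). Then the intrinsic relative interior of Ω is iri(Ω) = {x ∈ ℓ² | Σ_{k=1}^∞ |x_k| < 1}. -/
open Set Pointwise Filter Topology

open scoped ENNReal NNReal

/-!
The argument works for the closed unit ball `Ω = {p ≤ 1}` of any extended seminorm
`p : X → ℝ≥0∞` on a real vector space, here `p = ‖·‖₁` on `ℓ²`. If `p x < 1`, then
`x + t • y` stays in the ball for some `t > 0` exactly when `p y < ∞`, so the cone of `Ω - x`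
is the subspace `{p < ∞}`.
If `p x = 1`, then `-x` lies in the cone but `x` does not: `x = t • (b - x)` would give
`1 + t = p ((1 + t) • x) = p (t • b) ≤ t`.
-/

section ExtendedSeminormBall

variable {X : Type*} [AddCommGroup X] [Module ℝ X] {p : X → ℝ≥0∞}

lemma map_zero_of_map_smul (smul : ∀ (c : ℝ) y, p (c • y) = ‖c‖ₑ * p y) : p 0 = 0 := by
  simpa using smul 0 0

lemma map_neg_of_map_smul (smul : ∀ (c : ℝ) y, p (c • y) = ‖c‖ₑ * p y) (y : X) :
    p (-y) = p y := by
  simpa using smul (-1) y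

def finiteSubmodule (p : X → ℝ≥0∞) (smul : ∀ (c : ℝ) y, p (c • y) = ‖c‖ₑ * p y)
    (add_le : ∀ y z, p (y + z) ≤ p y + p z) : Submodule ℝ X where
  carrier := {y | p y ≠ ∞}
  zero_mem' := by simp [map_zero_of_map_smul smul]
  add_mem' {y z} hy hz := ne_top_of_le_ne_top (ENNReal.add_ne_top.2 ⟨hy, hz⟩) (add_le y z)
  smul_mem' c y hy := by
    simpa [smul c y] using ENNReal.mul_ne_top enorm_ne_top hy

lemma coneGen_sub_setOf_le_one_of_lt_one (smul : ∀ (c : ℝ) y, p (c • y) = ‖c‖ₑ * p y)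
    (add_le : ∀ y z, p (y + z) ≤ p y + p z) {x : X} (hx : p x < 1) :
    coneGen ((fun y => y - x) '' {y | p y ≤ 1}) = {y | p y ≠ ∞} := by
  ext y
  constructor
  · rintro ⟨t, -, _, ⟨a, ha, rfl⟩, rfl⟩
    have hsub : p (a - x) ≠ ∞ := by
      refine ne_top_of_le_ne_top ?_ (sub_eq_add_neg a x ▸ add_le a (-x))
      rw [map_neg_of_map_smul smul]
      exact ENNReal.add_ne_top.2
        ⟨ne_top_of_le_ne_top ENNReal.one_ne_top ha, (hx.trans ENNReal.one_lt_top).ne⟩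
    simpa [smul t] using ENNReal.mul_ne_top enorm_ne_top hsub
  · intro hy
    obtain ⟨t, ht, hty⟩ := ENNReal.exists_nnreal_pos_mul_lt hy (tsub_pos_of_lt hx).ne'
    have hmem : p (x + (t : ℝ) • y) ≤ 1 :=
      calc p (x + (t : ℝ) • y) ≤ p x + t * p y := by
            simpa [smul (t : ℝ) y, Real.enorm_eq_ofReal t.coe_nonneg]
              using add_le x ((t : ℝ) • y)
        _ ≤ p x + (1 - p x) := by gcongr
        _ = 1 := add_tsub_cancel_of_le hx.le
    refine ⟨(t : ℝ)⁻¹, by positivity, _, ⟨_, hmem, rfl⟩, ?_⟩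
    dsimp only
    rw [add_sub_cancel_left, smul_smul, inv_mul_cancel₀ (by exact_mod_cast ht.ne'), one_smul]

lemma not_isLinSubspace_coneGen_sub_setOf_le_one
    (smul : ∀ (c : ℝ) y, p (c • y) = ‖c‖ₑ * p y) {x : X} (hx : p x = 1) :
    ¬ IsLinSubspace (coneGen ((fun y => y - x) '' {y | p y ≤ 1})) := by
  rintro ⟨L, hL⟩
  have hneg : -x ∈ (L : Set X) := by
    rw [hL]
    exact ⟨1, zero_le_one, 0 - x, ⟨0, by simp [map_zero_of_map_smul smul], rfl⟩, by simp⟩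
  have hpos : x ∈ (L : Set X) := by simpa using L.neg_mem hneg
  rw [hL] at hpos
  obtain ⟨t, ht, _, ⟨b, hb, rfl⟩, hxt⟩ := hpos
  have hscaled : (1 + t) • x = t • b := by
    rw [add_smul, one_smul]
    nth_rewrite 1 [hxt]
    rw [smul_sub, sub_add_cancel]
  have hle : ENNReal.ofReal (1 + t) ≤ ENNReal.ofReal t :=
    calc ENNReal.ofReal (1 + t) = p ((1 + t) • x) := by
          rw [smul, hx, mul_one, Real.enorm_eq_ofReal (by linarith)]
      _ = ‖t‖ₑ * p b := by rw [hscaled, smul]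
      _ ≤ ENNReal.ofReal t := by
          rw [Real.enorm_eq_ofReal ht]
          exact mul_le_of_le_one_right' hb
  have := (ENNReal.ofReal_le_ofReal_iff ht).1 hle
  linarith

theorem iri_setOf_le_one (smul : ∀ (c : ℝ) y, p (c • y) = ‖c‖ₑ * p y)
    (add_le : ∀ y z, p (y + z) ≤ p y + p z) :
    iri {y | p y ≤ 1} = {y | p y < 1} := by
  ext x
  constructor
  · rintro ⟨hx, hcone⟩
    exact lt_of_le_of_ne hx fun h => not_isLinSubspace_coneGen_sub_setOf_le_one smul h hcone
  · intro (hx : p x < 1)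
    exact ⟨hx.le, finiteSubmodule p smul add_le,
      (coneGen_sub_setOf_le_one_of_lt_one smul add_le hx).symm⟩

end ExtendedSeminormBall

section LpOneNorm

variable {ι E : Type*} [NormedAddCommGroup E] {q : ℝ≥0∞}

lemma lp.tsum_enorm_smul [NormedSpace ℝ E] (c : ℝ) (y : lp (fun _ : ι => E) q) :
    ∑' k, ‖(c • y) k‖ₑ = ‖c‖ₑ * ∑' k, ‖y k‖ₑ := by
  simp only [lp.coeFn_smul, Pi.smul_apply, enorm_smul, ENNReal.tsum_mul_left]

lemma lp.tsum_enorm_add_le (y z : lp (fun _ : ι => E) q) :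
    ∑' k, ‖(y + z) k‖ₑ ≤ ∑' k, ‖y k‖ₑ + ∑' k, ‖z k‖ₑ := by
  rw [← ENNReal.tsum_add]
  exact ENNReal.tsum_le_tsum fun k => enorm_add_le (y k) (z k)

end LpOneNorm

/-- in `ℓ²`, the intrinsic relative interior of the `ℓ¹`-unit ball
`Ω = {x ∈ ℓ² | ‖x‖₁ ≤ 1}` is `{x ∈ ℓ² | ‖x‖₁ < 1}`. -/
theorem iri_of_l1_ball_in_l2 :
    iri {x : lp (fun _ : ℕ => ℝ) 2 | ∑' k, (‖x k‖₊ : ℝ≥0∞) ≤ 1} =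
      {x : lp (fun _ : ℕ => ℝ) 2 | ∑' k, (‖x k‖₊ : ℝ≥0∞) < 1} :=
  iri_setOf_le_one lp.tsum_enorm_smul lp.tsum_enorm_add_le
end

section
/- Let X = ℓ² and let Ω := {x = (x_k) ∈ ℓ² | Σ_{k=1}^∞ |x_k| ≤ 1}. Then the quasi-relative interior of Ω is qri(Ω) = Ω \ {x = (x_k) ∈ ℓ² | Σ_{k=1}^∞ |x_k| = 1 and there exists k₀ ∈ ℕ such that x_k = 0 for all k ≥ k₀}. -/
open Set Pointwise Filter Topology

open scoped ENNReal NNReal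

/-! A functional `f` in the normal cone of `Ω` at a point `x ∈ qri Ω` is constant on `Ω`: the
closed cone generated by `Ω - x` lies in `{f ≤ 0}` and is a subspace. If `‖x‖₁ = 1` and `x` has
finite support, pairing with the sign vector of `x` is such a functional, equal to `1` at `x` and
`0` at `0 ∈ Ω`, so `x ∉ qri Ω`.

Conversely it suffices that every `d` with `‖d‖₁ < ∞` (a dense set) lies in the closed cone. If
`‖x‖₁ < 1`, then `x + ε d ∈ Ω` for small `ε > 0`. If `‖x‖₁ = 1` and `x` has infinitely many nonzero
coordinates, choose `M` of them and shrink each by `μ` towards `0`: this frees `ℓ¹`-mass `M μ` to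
pay for `ε d` with `ε = M μ / (‖d‖₁ + 1)`, while moving `x` only by `√M μ` in `ℓ²`. The resulting
cone direction is at `ℓ²`-distance `(‖d‖₁ + 1) / √M` from `d`, and `M` is arbitrary.
-/

namespace Real

lemma abs_sub_mul_sign {t μ : ℝ} (hμ : 0 ≤ μ) (h : μ ≤ |t|) :
    |t - μ * sign t| = |t| - μ := by
  rcases lt_trichotomy t 0 with ht | rfl | ht
  · rw [abs_of_neg ht] at h ⊢
    rw [sign_of_neg ht, abs_of_nonpos (by linarith)]
    ring
  · rw [abs_zero] at h
    simp [le_antisymm h hμ]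
  · rw [abs_of_pos ht] at h ⊢
    rw [sign_of_pos ht, abs_of_nonneg (by linarith)]
    ring

lemma sign_mul_self (t : ℝ) : sign t * t = |t| := by
  rcases lt_trichotomy t 0 with h | rfl | h
  · rw [sign_of_neg h, abs_of_neg h, neg_one_mul]
  · simp
  · rw [sign_of_pos h, abs_of_pos h, one_mul]

lemma sign_mul_le_abs (s t : ℝ) : sign s * t ≤ |t| := by
  rcases sign_apply_eq s with h | h | h <;> simp [h, neg_le_abs, le_abs_self]

end Real

lemma ENNReal.ofReal_sum_abs {ι : Type*} (s : Finset ι) (y : ι → ℝ) :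
    ENNReal.ofReal (∑ k ∈ s, |y k|) = ∑ k ∈ s, ‖y k‖ₑ := by
  rw [ENNReal.ofReal_sum_of_nonneg fun k _ => abs_nonneg _]
  simp only [Real.enorm_eq_ofReal_abs]

lemma Nat.finite_setOf_iff_exists_forall_ge {p : ℕ → Prop} :
    {k | p k}.Finite ↔ ∃ k₀, ∀ k ≥ k₀, ¬ p k := by
  rw [← Set.not_infinite, ← Nat.frequently_atTop_iff_infinite, Filter.not_frequently,
    Filter.eventually_atTop]

section ConeGen

variable {X : Type*} [AddCommGroup X] [Module ℝ X]

lemma mem_coneGen_image_sub_of_add_smul_mem {Ω : Set X} {x d : X} {ε : ℝ} (hε : 0 < ε)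
    (h : x + ε • d ∈ Ω) : d ∈ coneGen ((fun y => y - x) '' Ω) :=
  ⟨ε⁻¹, inv_nonneg.mpr hε.le, ε • d, ⟨_, h, add_sub_cancel_left x _⟩,
    (inv_smul_smul₀ hε.ne' d).symm⟩

variable [TopologicalSpace X]

lemma mem_qri_of_dense_subset {Ω D : Set X} {x : X} (hx : x ∈ Ω) (hD : Dense D)
    (hsub : D ⊆ closure (coneGen ((fun y => y - x) '' Ω))) : x ∈ qri Ω := by
  refine ⟨hx, ⊤, (eq_univ_of_univ_subset ?_).symm⟩
  rw [← hD.closure_eq]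
  exact closure_minimal hsub isClosed_closure

lemma apply_eq_of_mem_qri_of_mem_normalCone {Ω : Set X} {x y : X} {f : X →L[ℝ] ℝ}
    (hx : x ∈ qri Ω) (hf : f ∈ normalCone Ω x) (hy : y ∈ Ω) : f y = f x := by
  obtain ⟨-, L, hL⟩ := hx
  have hcone : coneGen ((fun y => y - x) '' Ω) ⊆ {z | f z ≤ 0} := by
    rintro _ ⟨t, ht, _, ⟨y, hy, rfl⟩, rfl⟩
    simpa using mul_nonpos_of_nonneg_of_nonpos ht (hf y hy)
  have hyx : y - x ∈ L := by
    rw [← SetLike.mem_coe, hL]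
    exact subset_closure ⟨1, zero_le_one, _, ⟨y, hy, rfl⟩, (one_smul _ _).symm⟩
  have hxy : f (-(y - x)) ≤ 0 := by
    refine closure_minimal hcone (isClosed_le f.continuous continuous_const) ?_
    rw [← hL]
    exact L.neg_mem hyx
  have := hf y hy
  simp only [map_neg, map_sub] at hxy this
  linarith

end ConeGen

lemma lp.dense_setOf_tsum_enorm_ne_top {ι : Type*} {E : ι → Type*}
    [∀ i, NormedAddCommGroup (E i)] {p : ℝ≥0∞} [Fact (1 ≤ p)] (hp : p ≠ ⊤) :
    Dense {f : lp E p | ∑' i, ‖f i‖ₑ ≠ ⊤} := by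
  classical
  intro f
  refine mem_closure_of_tendsto (lp.hasSum_single hp f) (Filter.Eventually.of_forall fun s => ?_)
  have hcoe : ⇑(∑ i ∈ s, lp.single p i (f i)) = fun j => if j ∈ s then f j else 0 := by
    ext j
    simp only [lp.coeFn_sum, lp.coeFn_single, Finset.sum_apply, Finset.sum_pi_single]
  simp only [Set.mem_ofPred_eq, hcoe]
  rw [tsum_eq_sum (s := s) fun j hj => by simp [hj]]
  exact ENNReal.sum_ne_top.mpr fun j hj => by simp [hj]

section SignVector

variable {ι : Type*} [DecidableEq ι]

noncomputable def signVector (s : Finset ι) (x : ι → ℝ) : lp (fun _ : ι => ℝ) 2 :=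
  ∑ k ∈ s, lp.single 2 k (Real.sign (x k))

variable (s : Finset ι) (x : ι → ℝ)

lemma signVector_apply (k : ι) : signVector s x k = if k ∈ s then Real.sign (x k) else 0 := by
  simp only [signVector, lp.coeFn_sum, lp.coeFn_single, Finset.sum_apply, Finset.sum_pi_single]

lemma inner_signVector (y : lp (fun _ : ι => ℝ) 2) :
    inner ℝ (signVector s x) y = ∑ k ∈ s, Real.sign (x k) * y k := by
  simp only [signVector, sum_inner, lp.inner_single_left, RCLike.inner_apply, conj_trivial,
    mul_comm]

lemma norm_signVector_sq {s : Finset ι} {x : ι → ℝ} (hx : ∀ k ∈ s, x k ≠ 0) :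
    ‖signVector s x‖ ^ 2 = s.card := by
  have h := lp.norm_sum_single (p := 2) (by norm_num) (fun k => Real.sign (x k)) s
  simp only [ENNReal.toReal_ofNat, Real.rpow_two] at h
  rw [signVector, h, Finset.card_eq_sum_ones, Nat.cast_sum]
  refine Finset.sum_congr rfl fun k hk => ?_
  rcases Real.sign_apply_eq_of_ne_zero _ (hx k hk) with hk' | hk' <;> simp [hk']

end SignVector

section L1Ball

variable {ι : Type*}

lemma lp.tsum_enorm_add_smul_le {E : ι → Type*} [∀ i, NormedAddCommGroup (E i)]
    [∀ i, NormedSpace ℝ (E i)] {p : ℝ≥0∞} (x d : lp E p) (t : ℝ) :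
    ∑' i, ‖(x + t • d) i‖ₑ ≤ ∑' i, ‖x i‖ₑ + ‖t‖ₑ * ∑' i, ‖d i‖ₑ :=
  calc ∑' i, ‖(x + t • d) i‖ₑ ≤ ∑' i, (‖x i‖ₑ + ‖t‖ₑ * ‖d i‖ₑ) :=
        ENNReal.tsum_le_tsum fun i => (enorm_add_le (x i) (t • d i)).trans_eq (by rw [enorm_smul])
    _ = ∑' i, ‖x i‖ₑ + ‖t‖ₑ * ∑' i, ‖d i‖ₑ := by rw [ENNReal.tsum_add, ENNReal.tsum_mul_left]

lemma lp.mem_coneGen_of_tsum_enorm_lt_one {E : ι → Type*} [∀ i, NormedAddCommGroup (E i)]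
    [∀ i, NormedSpace ℝ (E i)] {p : ℝ≥0∞} {x d : lp E p} (hx : ∑' i, ‖x i‖ₑ < 1)
    (hd : ∑' i, ‖d i‖ₑ ≠ ⊤) :
    d ∈ coneGen ((fun y => y - x) '' {y : lp E p | ∑' i, ‖y i‖ₑ ≤ 1}) := by
  obtain ⟨ε, hε, hlt⟩ := ENNReal.exists_nnreal_pos_mul_lt hd (tsub_pos_of_lt hx).ne'
  refine mem_coneGen_image_sub_of_add_smul_mem (ε := ε) (NNReal.coe_pos.mpr hε) ?_
  calc ∑' i, ‖(x + (ε : ℝ) • d) i‖ₑ ≤ ∑' i, ‖x i‖ₑ + ε * ∑' i, ‖d i‖ₑ := by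
        simpa [NNReal.enorm_eq] using lp.tsum_enorm_add_smul_le x d ε
    _ ≤ ∑' i, ‖x i‖ₑ + (1 - ∑' i, ‖x i‖ₑ) := by gcongr
    _ = 1 := add_tsub_cancel_of_le hx.le

variable [DecidableEq ι]

lemma tsum_enorm_sub_smul_signVector_add (x : lp (fun _ : ι => ℝ) 2) {s : Finset ι} {μ : ℝ}
    (hμ : 0 ≤ μ) (hs : ∀ k ∈ s, μ ≤ |x k|) :
    ∑' k, ‖(x - μ • signVector s x) k‖ₑ + ENNReal.ofReal (μ * s.card) = ∑' k, ‖x k‖ₑ := by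
  have hpt (k : ι) : ‖(x - μ • signVector s x) k‖ₑ + (s : Set ι).indicator
      (fun _ => ENNReal.ofReal μ) k = ‖x k‖ₑ := by
    simp only [lp.coeFn_sub, lp.coeFn_smul, Pi.sub_apply, Pi.smul_apply, smul_eq_mul,
      signVector_apply, Real.enorm_eq_ofReal_abs]
    by_cases hk : k ∈ s
    · rw [if_pos hk, Set.indicator_of_mem (by simpa using hk), Real.abs_sub_mul_sign hμ (hs k hk),
        ← ENNReal.ofReal_add (sub_nonneg.2 (hs k hk)) hμ, sub_add_cancel]
    · simp [hk]
  rw [← tsum_congr hpt, ENNReal.tsum_add,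
    tsum_eq_sum (s := s) fun k hk => Set.indicator_of_notMem (by simpa using hk) _,
    Finset.sum_indicator_subset _ subset_rfl]
  simp [ENNReal.ofReal_mul hμ, mul_comm]

lemma exists_mem_coneGen_norm_sub_sq_eq {x d : lp (fun _ : ι => ℝ) 2}
    (hx : ∑' k, ‖x k‖ₑ ≤ 1) (hinf : {k | x k ≠ 0}.Infinite) (hd : ∑' k, ‖d k‖ₑ ≠ ⊤)
    {M : ℕ} (hM : 0 < M) :
    ∃ z ∈ coneGen ((fun y => y - x) '' {y : lp (fun _ : ι => ℝ) 2 | ∑' k, ‖y k‖ₑ ≤ 1}),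
      ‖d - z‖ ^ 2 = ((∑' k, ‖d k‖ₑ).toReal + 1) ^ 2 / M := by
  set c := (∑' k, ‖d k‖ₑ).toReal + 1
  have hc : 0 < c := by positivity
  obtain ⟨s, hs, hcard⟩ := hinf.exists_subset_card_eq M
  have hsx : ∀ k ∈ s, x k ≠ 0 := fun k hk => hs hk
  have hne : s.Nonempty := Finset.card_pos.mp (hcard ▸ hM)
  set μ := s.inf' hne fun k => |x k|
  have hμ : 0 < μ := (Finset.lt_inf'_iff _).2 fun k hk => abs_pos.2 (hsx k hk)
  have hμs : ∀ k ∈ s, μ ≤ |x k| := fun k hk => Finset.inf'_le _ hk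
  set ε := μ * M / c
  have hε : 0 < ε := by positivity
  have hεc : ε * c = μ * M := div_mul_cancel₀ _ hc.ne'
  refine ⟨d - (c / M) • signVector s x, mem_coneGen_image_sub_of_add_smul_mem hε ?_, ?_⟩
  · have hy : x + ε • (d - (c / M) • signVector s x) = (x - μ • signVector s x) + ε • d := by
      rw [smul_sub, smul_smul, ← mul_div_assoc, hεc, mul_div_cancel_right₀ _ (by positivity)]
      abel
    rw [Set.mem_ofPred_eq, hy]
    calc _ ≤ ∑' k, ‖(x - μ • signVector s x) k‖ₑ + ‖ε‖ₑ * ∑' k, ‖d k‖ₑ :=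
          lp.tsum_enorm_add_smul_le _ _ _
      _ ≤ ∑' k, ‖(x - μ • signVector s x) k‖ₑ + ENNReal.ofReal (μ * s.card) := by
          gcongr
          rw [Real.enorm_of_nonneg hε.le, ← ENNReal.ofReal_toReal hd,
            ← ENNReal.ofReal_mul hε.le, hcard]
          refine ENNReal.ofReal_le_ofReal ?_
          calc ε * _ ≤ ε * c := by gcongr; linarith
            _ = μ * M := hεc
      _ = ∑' k, ‖x k‖ₑ := tsum_enorm_sub_smul_signVector_add x hμ.le hμs
      _ ≤ 1 := hx
  · rw [sub_sub_cancel, norm_smul, mul_pow, norm_signVector_sq hsx, hcard,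
      Real.norm_of_nonneg (by positivity)]
    field_simp

lemma mem_closure_coneGen_of_infinite_support {x d : lp (fun _ : ι => ℝ) 2}
    (hx : ∑' k, ‖x k‖ₑ ≤ 1) (hinf : {k | x k ≠ 0}.Infinite) (hd : ∑' k, ‖d k‖ₑ ≠ ⊤) :
    d ∈ closure
      (coneGen ((fun y => y - x) '' {y : lp (fun _ : ι => ℝ) 2 | ∑' k, ‖y k‖ₑ ≤ 1})) := by
  rw [Metric.mem_closure_iff]
  intro δ hδ
  set c := (∑' k, ‖d k‖ₑ).toReal + 1
  obtain ⟨M, hM⟩ := exists_nat_gt (c ^ 2 / δ ^ 2)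
  have hM0 : 0 < M := by exact_mod_cast (by positivity : 0 ≤ c ^ 2 / δ ^ 2).trans_lt hM
  obtain ⟨z, hz, hdz⟩ := exists_mem_coneGen_norm_sub_sq_eq hx hinf hd hM0
  refine ⟨z, hz, lt_of_pow_lt_pow_left₀ 2 hδ.le ?_⟩
  rw [dist_eq_norm, hdz, div_lt_iff₀ (by positivity)]
  rwa [div_lt_iff₀ (by positivity), mul_comm] at hM

end L1Ball

lemma notMem_qri_of_finite_support {ι : Type*} [DecidableEq ι] {x : lp (fun _ : ι => ℝ) 2}
    (h1 : ∑' k, ‖x k‖ₑ = 1) (hfin : {k | x k ≠ 0}.Finite) :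
    x ∉ qri {y : lp (fun _ : ι => ℝ) 2 | ∑' k, ‖y k‖ₑ ≤ 1} := by
  intro hqri
  set s := hfin.toFinset
  set f := innerSL ℝ (signVector s x)
  have hf (y : lp (fun _ : ι => ℝ) 2) : f y = ∑ k ∈ s, Real.sign (x k) * y k :=
    inner_signVector s x y
  have hfx : f x = 1 := by
    have hx : ∑' k, ‖x k‖ₑ = ∑ k ∈ s, ‖x k‖ₑ :=
      tsum_eq_sum fun k hk => by simp_all [s]
    rw [hf, Finset.sum_congr rfl fun k _ => Real.sign_mul_self (x k)]
    rwa [h1, ← ENNReal.ofReal_sum_abs, eq_comm, ENNReal.ofReal_eq_one] at hx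
  have hnormal : f ∈ normalCone {y : lp (fun _ : ι => ℝ) 2 | ∑' k, ‖y k‖ₑ ≤ 1} x := by
    intro y hy
    have hy' : ∑ k ∈ s, |y k| ≤ 1 := by
      rw [← ENNReal.ofReal_le_one, ENNReal.ofReal_sum_abs]
      exact (ENNReal.sum_le_tsum s).trans hy
    rw [map_sub, hfx, hf, sub_nonpos]
    exact (Finset.sum_le_sum fun k _ => Real.sign_mul_le_abs _ _).trans hy'
  have h0 := apply_eq_of_mem_qri_of_mem_normalCone hqri hnormal (y := 0) (by simp)
  rw [map_zero, hfx] at h0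
  exact zero_ne_one h0

/-- in `ℓ²`, the quasi-relative interior of the `ℓ¹`-unit ball
`Ω = {x ∈ ℓ² | ‖x‖₁ ≤ 1}` is `Ω` minus the points of `ℓ¹`-norm one having only
finitely many nonzero coordinates. -/
theorem qri_of_l1_ball_in_l2 :
    qri {x : lp (fun _ : ℕ => ℝ) 2 | ∑' k, (‖x k‖₊ : ℝ≥0∞) ≤ 1} =
      {x : lp (fun _ : ℕ => ℝ) 2 | ∑' k, (‖x k‖₊ : ℝ≥0∞) ≤ 1} \
        {x : lp (fun _ : ℕ => ℝ) 2 | (∑' k, (‖x k‖₊ : ℝ≥0∞)) = 1 ∧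
          ∃ k₀ : ℕ, ∀ k ≥ k₀, x k = 0} := by
  ext x
  have hfin : {k | x k ≠ 0}.Finite ↔ ∃ k₀ : ℕ, ∀ k ≥ k₀, x k = 0 := by
    simpa using Nat.finite_setOf_iff_exists_forall_ge (p := fun k => x k ≠ 0)
  constructor
  · intro hx
    exact ⟨hx.1, fun ⟨h1, hk⟩ => notMem_qri_of_finite_support h1 (hfin.2 hk) hx⟩
  · rintro ⟨hx, hbad⟩
    refine mem_qri_of_dense_subset hx (lp.dense_setOf_tsum_enorm_ne_top ENNReal.ofNat_ne_top)
      fun d hd => ?_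
    rcases (show ∑' k, ‖x k‖ₑ ≤ 1 from hx).lt_or_eq with hlt | h1
    · exact subset_closure (lp.mem_coneGen_of_tsum_enorm_lt_one hlt hd)
    · exact mem_closure_coneGen_of_infinite_support hx (fun hinf => hbad ⟨h1, hfin.1 hinf⟩) hd
end

section
/- Let X = ℓ² and let Ω := {x = (x₁, x₂, …) ∈ ℓ² | ‖x‖₂ ≤ 1 and x_k ≥ 0 for all k ∈ ℕ}. Then the intrinsic relative interior of Ω is empty: iri(Ω) = ∅. -/
open Set Pointwise Filter Topology
open scoped ENNReal

/-- in `ℓ²`, the set `Ω = {x | ‖x‖₂ ≤ 1, x_k ≥ 0 ∀k}` has empty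
intrinsic relative interior. -/
theorem iri_empty_of_nonneg_ball_in_l2 :
    iri {x : lp (fun _ : ℕ => ℝ) 2 | ‖x‖ ≤ 1 ∧ ∀ k : ℕ, 0 ≤ x k} = (∅ : Set (lp (fun _ : ℕ => ℝ) 2)) := by
  classical
  set Ω : Set (lp (fun _ : ℕ => ℝ) 2) := {x | ‖x‖ ≤ 1 ∧ ∀ k : ℕ, 0 ≤ x k} with hΩ
  ext x
  simp only [Set.mem_empty_iff_false, iff_false]
  rintro ⟨⟨hxn, hxpos⟩, L, hL⟩
  -- coordinates of x tend to 0
  have hsum : Summable (fun k => ‖x k‖ ^ (2:ℕ)) := by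
    have h := (lp.memℓp x).summable (p := 2) (by norm_num)
    have h2 : (2 : ℝ≥0∞).toReal = ((2:ℕ):ℝ) := by norm_num
    rw [h2] at h
    simpa [Real.rpow_natCast] using h
  have htend : Tendsto (fun k => ‖x k‖ ^ (2:ℕ)) atTop (nhds 0) := hsum.tendsto_atTop_zero
  have hev : ∀ j : ℕ, ∀ᶠ k in atTop, x k < (1/8 : ℝ) ^ j := by
    intro j
    have hpos : (0:ℝ) < ((1/8 : ℝ) ^ j) ^ (2:ℕ) := by positivity
    filter_upwards [htend.eventually_lt_const hpos] with k hk
    have h1 : ‖x k‖ < (1/8:ℝ) ^ j := by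
      exact lt_of_pow_lt_pow_left₀ 2 (by positivity) hk
    calc x k ≤ ‖x k‖ := le_abs_self _
    _ < _ := h1
  obtain ⟨φ, hφmono, hφ⟩ := Filter.extraction_forall_of_eventually hev
  have hinj : Function.Injective φ := hφmono.injective
  -- the perturbation sequence
  set α : ℕ → ℝ := fun m => if h : ∃ j, φ j = m then (1/2 : ℝ) ^ (Nat.find h + 2) else 0 with hα
  have hαφ : ∀ j, α (φ j) = (1/2 : ℝ) ^ (j + 2) := by
    intro j
    have hex : ∃ j', φ j' = φ j := ⟨j, rfl⟩
    have : Nat.find hex = j := hinj (Nat.find_spec hex)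
    simp only [hα, dif_pos hex, this]
  have hα0 : ∀ m, m ∉ Set.range φ → α m = 0 := by
    intro m hm
    have : ¬ ∃ j, φ j = m := by simpa [Set.range] using hm
    simp [hα, dif_neg this]
  have hαnn : ∀ m, 0 ≤ α m := by
    intro m
    by_cases h : ∃ j, φ j = m
    · simp only [hα, dif_pos h]; positivity
    · simp [hα, dif_neg h]
  -- summability of squares
  have hsupp : Function.support (fun m => ‖α m‖ ^ (2:ℕ)) ⊆ Set.range φ := by
    intro m hm
    by_contra hc
    exact hm (by simp [hα0 m hc])
  have hsq : ∀ j, ‖α (φ j)‖ ^ (2:ℕ) = (1/16 : ℝ) * (1/4 : ℝ) ^ j := by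
    intro j
    have e1 : ((1/2:ℝ)^(j+2))^2 = ((1/2:ℝ)^2)^(j+2) := by
      rw [← pow_mul, ← pow_mul, Nat.mul_comm]
    rw [hαφ j, Real.norm_eq_abs, abs_of_nonneg (by positivity), e1, pow_add]
    norm_num
    ring
  have hsum2 : Summable (fun m => ‖α m‖ ^ (2:ℕ)) := by
    rw [← hinj.summable_iff (f := fun m => ‖α m‖ ^ (2:ℕ))
      (fun m hm => by by_contra hc; exact hm (hsupp (by simpa using hc)))]
    · refine Summable.congr ?_ (fun j => (hsq j).symm)
      exact (summable_geometric_of_lt_one (by norm_num) (by norm_num)).mul_left _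
  have hmem : Memℓp α 2 := by
    apply memℓp_gen
    have h2 : (2 : ℝ≥0∞).toReal = ((2:ℕ):ℝ) := by norm_num
    rw [h2]
    simpa [Real.rpow_natCast] using hsum2
  set A : lp (fun _ : ℕ => ℝ) 2 := ⟨α, hmem⟩ with hA
  have hAcoe : ∀ m, A m = α m := fun m => rfl
  -- tsum of squares equals 1/12
  have htsum : ∑' m, ‖A m‖ ^ (2:ℕ) = (1/12 : ℝ) := by
    have h1 : ∑' j, ‖α (φ j)‖ ^ (2:ℕ) = ∑' m, ‖α m‖ ^ (2:ℕ) :=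
      hinj.tsum_eq hsupp
    have h2 : ∑' j, ‖α (φ j)‖ ^ (2:ℕ) = (1/12 : ℝ) := by
      rw [tsum_congr hsq, tsum_mul_left, tsum_geometric_of_lt_one (by norm_num) (by norm_num)]
      norm_num
    simp only [hAcoe]
    rw [← h1, h2]
  -- norm of A is at most 1/2
  have hAnorm : ‖A‖ ≤ 1/2 := by
    have hrp := lp.norm_rpow_eq_tsum (p := 2) (by norm_num) A
    have h2 : (2 : ℝ≥0∞).toReal = ((2:ℕ):ℝ) := by norm_num
    rw [h2] at hrp
    simp only [Real.rpow_natCast] at hrp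
    have : ‖A‖ ^ (2:ℕ) = (1/12 : ℝ) := by rw [hrp]; exact htsum
    have h14 : ‖A‖ ^ (2:ℕ) ≤ (1/2 : ℝ) ^ (2:ℕ) := by rw [this]; norm_num
    exact le_of_pow_le_pow_left₀ (by norm_num) (by norm_num) h14
  -- y = x/2 + A is in Ω
  have hhalf : (2⁻¹ : ℝ) • x ∈ Ω := by
    constructor
    · rw [norm_smul]
      simp only [norm_inv, Real.norm_ofNat]
      nlinarith [norm_nonneg x]
    · intro k
      rw [lp.coeFn_smul, Pi.smul_apply, smul_eq_mul]
      exact mul_nonneg (by norm_num) (hxpos k)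
  have hy : (2⁻¹ : ℝ) • x + A ∈ Ω := by
    constructor
    · calc ‖(2⁻¹ : ℝ) • x + A‖ ≤ ‖(2⁻¹ : ℝ) • x‖ + ‖A‖ := norm_add_le _ _
      _ ≤ 1/2 + 1/2 := by
          refine add_le_add ?_ hAnorm
          rw [norm_smul]; simp only [norm_inv, Real.norm_ofNat]
          nlinarith [norm_nonneg x]
      _ = 1 := by norm_num
    · intro k
      rw [lp.coeFn_add, Pi.add_apply, lp.coeFn_smul, Pi.smul_apply]
      have := hxpos k
      have := hαnn k
      rw [hAcoe]
      simp only [smul_eq_mul]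
      nlinarith
  -- A belongs to L
  have hmemL : ∀ z ∈ Ω, z - x ∈ L := by
    intro z hz
    have : z - x ∈ coneGen ((fun y => y - x) '' Ω) :=
      ⟨1, zero_le_one, z - x, ⟨z, hz, rfl⟩, (one_smul _ _).symm⟩
    rw [← hL] at this
    exact this
  have hAL : A ∈ L := by
    have h1 := hmemL _ hy
    have h2 := hmemL _ hhalf
    have : A = (((2⁻¹ : ℝ) • x + A) - x) - (((2⁻¹ : ℝ) • x) - x) := by abel
    rw [this]
    exact sub_mem h1 h2
  have hnegA : -A ∈ coneGen ((fun y => y - x) '' Ω) := by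
    rw [← hL]
    exact neg_mem hAL
  obtain ⟨t, ht, a, ⟨z, hz, rfl⟩, hEq⟩ := hnegA
  -- coordinatewise equation
  have hcoord : ∀ m, -α m = t * (z m - x m) := by
    intro m
    have := congrFun (congrArg (fun f : lp (fun _ : ℕ => ℝ) 2 => (f : ℕ → ℝ)) hEq) m
    simp only [lp.coeFn_neg, Pi.neg_apply, lp.coeFn_smul, Pi.smul_apply, lp.coeFn_sub,
      Pi.sub_apply, smul_eq_mul, hAcoe] at this
    rw [← hAcoe m]
    exact this
  -- t is positive
  have ht0 : 0 < t := by
    rcases lt_or_eq_of_le ht with h | h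
    · exact h
    · exfalso
      have := hcoord (φ 0)
      rw [hαφ 0, ← h] at this
      norm_num at this
  -- key inequality : (1/2)^(j+2) ≤ t * (1/8)^j
  have hkey : ∀ j, (1/2 : ℝ) ^ (j + 2) ≤ t * (1/8 : ℝ) ^ j := by
    intro j
    have hc := hcoord (φ j)
    rw [hαφ j] at hc
    have hznn := hz.2 (φ j)
    have hxj := le_of_lt (hφ j)
    nlinarith [mul_nonneg (le_of_lt ht0) hznn]
  -- contradiction: choose j with 4^j > 4*t
  obtain ⟨j, hj⟩ := pow_unbounded_of_one_lt (4 * t) (by norm_num : (1:ℝ) < 4)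
  have := hkey j
  have h8 : (0:ℝ) < (1/8:ℝ)^j := by positivity
  have hlt : t * (1/8:ℝ)^j < (1/2:ℝ)^(j+2) := by
    have : t < (4:ℝ)^j / 4 := by linarith
    have h48 : (4:ℝ)^j * (1/8:ℝ)^j = (1/2:ℝ)^j := by
      rw [← mul_pow]; norm_num
    calc t * (1/8:ℝ)^j < ((4:ℝ)^j / 4) * (1/8:ℝ)^j :=
          mul_lt_mul_of_pos_right this h8
    _ = (4:ℝ)^j * (1/8:ℝ)^j / 4 := by ring
    _ = (1/2:ℝ)^j / 4 := by rw [h48]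
    _ = (1/2:ℝ)^(j+2) := by rw [pow_add]; ring
  linarith
end

section
/- Let F: X ⇉ Y be a set-valued mapping between locally convex topological vector spaces whose graph is convex. Then qri(gph F) ⊇ {(x, y) ∈ X × Y | x ∈ qri(dom F) and y ∈ int(F(x))}. -/
open Set Pointwise Filter Topology

/-- The graph of a set-valued mapping. -/
def gph {X Y : Type*} (F : X → Set Y) : Set (X × Y) := {p | p.2 ∈ F p.1}

/-- The domain of a set-valued mapping. -/
def domF {X Y : Type*} (F : X → Set Y) : Set X := {x | (F x).Nonempty}

/-!
Translate so that `(x, y)` becomes the origin. Since `y` is an interior point of `F x`, the cone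
generated by `gph F - (x, y)` contains the whole vertical line `{0} × Y`; since that cone is
convex, adding vertical vectors shows that it is exactly `cone (dom F - x) × Y`. Its closure is
therefore `cl cone (dom F - x) × Y`, a linear subspace because `x ∈ qri (dom F)`.
-/

section coneGen

variable {X : Type*} [AddCommGroup X] [Module ℝ X]

theorem Convex.add_mem_coneGen {A : Set X} (hA : Convex ℝ A) {a b : X}
    (ha : a ∈ coneGen A) (hb : b ∈ coneGen A) : a + b ∈ coneGen A := by
  obtain ⟨s, hs, p, hp, rfl⟩ := ha
  obtain ⟨t, ht, q, hq, rfl⟩ := hb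
  rcases (add_nonneg hs ht).eq_or_lt with hst | hst
  · obtain ⟨rfl, rfl⟩ : s = 0 ∧ t = 0 := ⟨by linarith, by linarith⟩
    exact ⟨0, le_rfl, p, hp, by simp⟩
  · refine ⟨s + t, hst.le, (s / (s + t)) • p + (t / (s + t)) • q,
      hA hp hq (div_nonneg hs hst.le) (div_nonneg ht hst.le) (by field_simp), ?_⟩
    rw [smul_add, smul_smul, smul_smul]
    field_simp

theorem IsLinSubspace.prod_univ {Y : Type*} [AddCommGroup Y] [Module ℝ Y] {s : Set X}
    (hs : IsLinSubspace s) : IsLinSubspace (s ×ˢ (univ : Set Y)) := by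
  obtain ⟨L, rfl⟩ := hs
  exact ⟨L.prod ⊤, by ext; simp⟩

theorem mem_coneGen_sub_of_mem_interior [TopologicalSpace X] [ContinuousAdd X]
    [ContinuousSMul ℝ X] {S : Set X} {y : X} (hy : y ∈ interior S) (z : X) :
    z ∈ coneGen ((· - y) '' S) := by
  have hline : Tendsto (fun t : ℝ => y + t • z) (𝓝 0) (𝓝 y) := by
    simpa using tendsto_const_nhds.add
      ((continuous_id.smul continuous_const : Continuous fun t : ℝ => t • z).tendsto 0)
  have hmem : ∀ᶠ t in 𝓝[>] (0 : ℝ), y + t • z ∈ S :=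
    (hline.eventually_mem (mem_interior_iff_mem_nhds.mp hy)).filter_mono nhdsWithin_le_nhds
  obtain ⟨t, htS, htpos⟩ := (hmem.and self_mem_nhdsWithin).exists
  refine ⟨t⁻¹, (inv_pos.mpr htpos).le, t • z, ⟨y + t • z, htS, add_sub_cancel_left y _⟩, ?_⟩
  rw [smul_smul, inv_mul_cancel₀ (ne_of_gt htpos), one_smul]

end coneGen

theorem coneGen_gph_sub_eq_prod_univ {X Y : Type*} [AddCommGroup X] [Module ℝ X]
    [AddCommGroup Y] [Module ℝ Y] [TopologicalSpace Y] [ContinuousAdd Y] [ContinuousSMul ℝ Y]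
    {F : X → Set Y} (hF : Convex ℝ (gph F)) {x : X} {y : Y} (hy : y ∈ interior (F x)) :
    coneGen ((· - (x, y)) '' gph F) = coneGen ((· - x) '' domF F) ×ˢ univ := by
  have hconv : Convex ℝ ((· - (x, y)) '' gph F) := by
    simpa only [sub_eq_neg_add] using hF.translate (-(x, y))
  ext ⟨w, z⟩
  constructor
  · rintro ⟨t, ht, _, ⟨⟨u, v⟩, huv, rfl⟩, h⟩
    exact ⟨⟨t, ht, u - x, ⟨u, ⟨v, huv⟩, rfl⟩, congrArg Prod.fst h⟩, trivial⟩
  · rintro ⟨⟨t, ht, _, ⟨u, ⟨v, huv⟩, rfl⟩, rfl⟩, -⟩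
    have hgraph : (t • (u - x), t • (v - y)) ∈ coneGen ((· - (x, y)) '' gph F) :=
      ⟨t, ht, (u, v) - (x, y), ⟨(u, v), huv, rfl⟩, rfl⟩
    have hvertical : ((0 : X), z - t • (v - y)) ∈ coneGen ((· - (x, y)) '' gph F) := by
      obtain ⟨s, hs, _, ⟨v', hv', rfl⟩, h⟩ :=
        mem_coneGen_sub_of_mem_interior hy (z - t • (v - y))
      exact ⟨s, hs, (x, v') - (x, y), ⟨(x, v'), hv', rfl⟩, by simp [h]⟩
    simpa using hconv.add_mem_coneGen hgraph hvertical

theorem qri_gph_superset_general {X Y : Type*} [AddCommGroup X] [Module ℝ X]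
    [TopologicalSpace X]
    [AddCommGroup Y] [Module ℝ Y]
    [TopologicalSpace Y] [IsTopologicalAddGroup Y] [ContinuousSMul ℝ Y]
    (F : X → Set Y) (hconv : Convex ℝ (gph F)) :
    {p : X × Y | p.1 ∈ qri (domF F) ∧ p.2 ∈ interior (F p.1)} ⊆ qri (gph F) := by
  rintro ⟨x, y⟩ ⟨⟨-, hdom⟩, hy⟩
  refine ⟨(interior_subset hy : y ∈ F x), ?_⟩
  rw [coneGen_gph_sub_eq_prod_univ hconv hy, closure_prod_eq, closure_univ]
  exact hdom.prod_univ

/-- for a convex set-valued mapping `F` between LCTV spaces,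
`qri (gph F)` contains all `(x, y)` with `x ∈ qri (dom F)` and `y ∈ int (F x)`. -/
theorem qri_gph_superset {X Y : Type*} [AddCommGroup X] [Module ℝ X]
    [TopologicalSpace X] [IsTopologicalAddGroup X] [ContinuousSMul ℝ X]
    [LocallyConvexSpace ℝ X]
    [AddCommGroup Y] [Module ℝ Y]
    [TopologicalSpace Y] [IsTopologicalAddGroup Y] [ContinuousSMul ℝ Y]
    [LocallyConvexSpace ℝ Y]
    (F : X → Set Y) (hconv : Convex ℝ (gph F)) :
    {p : X × Y | p.1 ∈ qri (domF F) ∧ p.2 ∈ interior (F p.1)} ⊆ qri (gph F) :=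
  qri_gph_superset_general F hconv
end

section
/- Let F: X ⇉ Y be a set-valued mapping between locally convex topological vector spaces whose graph is convex. Then iri(gph F) ⊆ {(x, y) ∈ X × Y | x ∈ iri(dom F) and y ∈ iri(F(x))}. -/
open Set Pointwise Filter Topology

/-! Under `Prod.fst` the cone generated by `gph F - (x, y)` maps onto the cone generated by
`dom F - x`, and its slice over `0` is the cone generated by `F x - y`. Linear images and
preimages of subspaces are subspaces. -/

section

variable {X Y : Type*} [AddCommGroup X] [Module ℝ X] [AddCommGroup Y] [Module ℝ Y]

theorem coneGen_image (f : X →ₗ[ℝ] Y) (A : Set X) : coneGen (f '' A) = f '' coneGen A := by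
  ext z
  constructor
  · rintro ⟨t, ht, _, ⟨a, ha, rfl⟩, rfl⟩
    exact ⟨t • a, ⟨t, ht, a, ha, rfl⟩, map_smul f t a⟩
  · rintro ⟨_, ⟨t, ht, a, ha, rfl⟩, rfl⟩
    exact ⟨t, ht, f a, mem_image_of_mem f ha, map_smul f t a⟩

theorem IsLinSubspace.image {s : Set X} (hs : IsLinSubspace s) (f : X →ₗ[ℝ] Y) :
    IsLinSubspace (f '' s) := by
  obtain ⟨L, rfl⟩ := hs
  exact ⟨L.map f, Submodule.map_coe f L⟩

theorem IsLinSubspace.preimage {s : Set Y} (hs : IsLinSubspace s) (f : X →ₗ[ℝ] Y) :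
    IsLinSubspace (f ⁻¹' s) := by
  obtain ⟨L, rfl⟩ := hs
  exact ⟨L.comap f, Submodule.comap_coe f L⟩

theorem map_mem_iri_image (f : X →ₗ[ℝ] Y) {Ω : Set X} {x : X} (hx : x ∈ iri Ω) :
    f x ∈ iri (f '' Ω) := by
  refine ⟨mem_image_of_mem f hx.1, ?_⟩
  have hcone : (fun y => y - f x) '' (f '' Ω) = f '' ((fun y => y - x) '' Ω) := by
    simp only [image_image, map_sub]
  rw [hcone, coneGen_image]
  exact hx.2.image f

theorem coneGen_sub_preimage {f : Y →ᵃ[ℝ] X} (hf : Function.Injective f) {Ω : Set X} {y : Y}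
    (hy : f y ∈ Ω) :
    coneGen ((fun z => z - y) '' (f ⁻¹' Ω)) = f.linear ⁻¹' coneGen ((fun w => w - f y) '' Ω) := by
  ext z
  constructor
  · rintro ⟨t, ht, _, ⟨w, hw, rfl⟩, rfl⟩
    refine ⟨t, ht, f w - f y, ⟨f w, hw, rfl⟩, ?_⟩
    rw [map_smul]
    exact congrArg (t • ·) (f.linearMap_vsub w y)
  · rintro ⟨t, ht, _, ⟨ω, hω, rfl⟩, hz⟩
    rcases ht.eq_or_lt with rfl | htpos
    · have hz0 : z = 0 := by
        rw [zero_smul] at hz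
        exact (f.linear_injective_iff.mpr hf) (hz.trans (map_zero f.linear).symm)
      exact ⟨0, le_rfl, y - y, ⟨y, hy, rfl⟩, by rw [hz0, zero_smul]⟩
    · -- `z` points from `y` towards the point `y + t⁻¹ • z` of `f ⁻¹' Ω`, which `f` sends to `ω`.
      have hω' : f (t⁻¹ • z + y) = ω := by
        rw [← vadd_eq_add, f.map_vadd, map_smul, hz, smul_smul, inv_mul_cancel₀ htpos.ne',
          one_smul, vadd_eq_add, sub_add_cancel]
      refine ⟨t, ht, t⁻¹ • z + y - y, ⟨t⁻¹ • z + y, by rwa [mem_preimage, hω'], rfl⟩, ?_⟩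
      rw [add_sub_cancel_right, smul_smul, mul_inv_cancel₀ htpos.ne', one_smul]

theorem mem_iri_preimage {f : Y →ᵃ[ℝ] X} (hf : Function.Injective f) {Ω : Set X} {y : Y}
    (hy : f y ∈ iri Ω) : y ∈ iri (f ⁻¹' Ω) :=
  ⟨hy.1, by rw [coneGen_sub_preimage hf hy.1]; exact hy.2.preimage f.linear⟩

end

theorem domF_eq_image_fst {X Y : Type*} (F : X → Set Y) : domF F = Prod.fst '' gph F := by
  ext x
  exact ⟨fun ⟨y, hy⟩ => ⟨(x, y), hy, rfl⟩, by rintro ⟨⟨x, y⟩, hy, rfl⟩; exact ⟨y, hy⟩⟩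

theorem iri_gph_subset_general {X Y : Type*} [AddCommGroup X] [Module ℝ X]
    [AddCommGroup Y] [Module ℝ Y]
    (F : X → Set Y) :
    iri (gph F) ⊆ {p : X × Y | p.1 ∈ iri (domF F) ∧ p.2 ∈ iri (F p.1)} := by
  rintro ⟨x, y⟩ hp
  refine ⟨?_, ?_⟩
  · rw [domF_eq_image_fst]
    exact map_mem_iri_image (LinearMap.fst ℝ X Y) hp
  · let slice : Y →ᵃ[ℝ] X × Y := (AffineMap.const ℝ Y x).prod (AffineMap.id ℝ Y)
    exact mem_iri_preimage (f := slice) (fun a b h => congrArg Prod.snd h) hp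

/-- for a convex set-valued mapping `F` between LCTV spaces,
`iri (gph F)` is contained in the set of `(x, y)` with `x ∈ iri (dom F)` and
`y ∈ iri (F x)`. -/
theorem iri_gph_subset {X Y : Type*} [AddCommGroup X] [Module ℝ X]
    [TopologicalSpace X] [IsTopologicalAddGroup X] [ContinuousSMul ℝ X]
    [LocallyConvexSpace ℝ X]
    [AddCommGroup Y] [Module ℝ Y]
    [TopologicalSpace Y] [IsTopologicalAddGroup Y] [ContinuousSMul ℝ Y]
    [LocallyConvexSpace ℝ Y]
    (F : X → Set Y) (hconv : Convex ℝ (gph F)) :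
    iri (gph F) ⊆ {p : X × Y | p.1 ∈ iri (domF F) ∧ p.2 ∈ iri (F p.1)} :=
  iri_gph_subset_general F
end

section
/- Let A: X → Y be a continuous linear mapping between locally convex topological vector spaces and let Ω ⊆ X be a convex set. Then: (a) A(iri(Ω)) ⊆ iri(A(Ω)) and A(qri(Ω)) ⊆ qri(A(Ω)); (b) if iri(Ω) ≠ ∅, then A(iri(Ω)) = iri(A(Ω)); (c) if qri(Ω) ≠ ∅ and the set A(Ω) is quasi-regular, then A(qri(Ω)) = qri(A(Ω)). -/
open Set Pointwise Filter Topology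

/-- A convex set is quasi-regular if its quasi-relative interior coincides with
its intrinsic relative interior. -/
def QuasiRegular {X : Type*} [AddCommGroup X] [Module ℝ X] [TopologicalSpace X]
    (Ω : Set X) : Prop :=
  qri Ω = iri Ω

/-!
A linear map `A` carries the cone `cone(Ω - x)` onto `cone(A Ω - A x)`, so a subspace (or the
closure of one, by continuity) goes to a subspace: this gives the inclusions. Conversely, let
`y ∈ iri (A Ω)` and `x₀ ∈ iri Ω` (resp. `qri Ω`). Since `A x₀ - y` lies in the subspace
`cone(A Ω - y)`, so does `y - A x₀`, i.e. `y` lies on a segment `[A x₀, A z)` with `z ∈ Ω`. The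
corresponding point of `[x₀, z)` is a preimage of `y`, and it stays in `iri Ω` (resp. `qri Ω`):
moving the base point from `x₀` towards `z` only enlarges the cone, while `Ω - x'` stays inside
the subspace `cone(Ω - x₀)` (resp. its closure) for every `x' ∈ Ω`.
-/

section Cone

variable {X : Type*} [AddCommGroup X] [Module ℝ X]

lemma subset_coneGen_s18 (S : Set X) : S ⊆ coneGen S :=
  fun a ha => ⟨1, zero_le_one, a, ha, (one_smul ℝ a).symm⟩

lemma coneGen_subset_submodule {S : Set X} {L : Submodule ℝ X} (h : S ⊆ L) :
    coneGen S ⊆ L := by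
  rintro _ ⟨t, -, a, ha, rfl⟩
  exact L.smul_mem t (h ha)

lemma image_sub_subset_submodule {Ω : Set X} {x x' : X} {L : Submodule ℝ X}
    (h : (fun y => y - x) '' Ω ⊆ L) (hx' : x' ∈ Ω) :
    (fun y => y - x') '' Ω ⊆ L := by
  rintro _ ⟨ω, hω, rfl⟩
  simpa using L.sub_mem (h ⟨ω, hω, rfl⟩) (h ⟨x', hx', rfl⟩)

lemma coneGen_image_sub_subset_of_convex {Ω : Set X} (hΩ : Convex ℝ Ω) {x z : X} (hz : z ∈ Ω)
    {l : ℝ} (hl₀ : 0 < l) (hl₁ : l ≤ 1) :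
    coneGen ((fun y => y - x) '' Ω) ⊆ coneGen ((fun y => y - (l • x + (1 - l) • z)) '' Ω) := by
  rintro _ ⟨t, ht, _, ⟨ω, hω, rfl⟩, rfl⟩
  refine ⟨t / l, div_nonneg ht hl₀.le, _,
    ⟨l • ω + (1 - l) • z, hΩ hω hz hl₀.le (by linarith) (by ring), rfl⟩, ?_⟩
  simp only [smul_sub, smul_add, smul_smul, div_mul_cancel₀ t hl₀.ne']
  module

lemma image_coneGen_image_sub {Y : Type*} [AddCommGroup Y] [Module ℝ Y] (f : X →ₗ[ℝ] Y)
    (Ω : Set X) (x : X) :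
    f '' coneGen ((fun y => y - x) '' Ω) = coneGen ((fun y => y - f x) '' (f '' Ω)) := by
  ext v
  simp only [coneGen, mem_image, mem_ofPred_eq]
  constructor
  · rintro ⟨_, ⟨t, ht, _, ⟨ω, hω, rfl⟩, rfl⟩, rfl⟩
    exact ⟨t, ht, _, ⟨_, ⟨ω, hω, rfl⟩, rfl⟩, by simp⟩
  · rintro ⟨t, ht, _, ⟨_, ⟨ω, hω, rfl⟩, rfl⟩, rfl⟩
    exact ⟨_, ⟨t, ht, _, ⟨ω, hω, rfl⟩, rfl⟩, by simp⟩

end Cone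

section Iri

variable {X : Type*} [AddCommGroup X] [Module ℝ X]

lemma exists_eq_smul_add_smul_of_mem_iri {S : Set X} {y w : X} (hy : y ∈ iri S) (hw : w ∈ S) :
    ∃ l : ℝ, 0 < l ∧ l ≤ 1 ∧ ∃ z ∈ S, l • w + (1 - l) • z = y := by
  obtain ⟨-, L, hL⟩ := hy
  have hwy : w - y ∈ (L : Set X) := hL ▸ subset_coneGen_s18 _ ⟨w, hw, rfl⟩
  have hyw : y - w ∈ (L : Set X) := by simpa using L.neg_mem hwy
  rw [hL] at hyw
  obtain ⟨t, ht, _, ⟨z, hz, rfl⟩, heq⟩ := hyw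
  have ht₁ : 0 < 1 + t := by linarith
  refine ⟨(1 + t)⁻¹, inv_pos.2 ht₁, inv_le_one_of_one_le₀ (by linarith), z, hz, ?_⟩
  have hinv : (1 + t)⁻¹ * (1 + t) = 1 := inv_mul_cancel₀ ht₁.ne'
  linear_combination (norm := module) (-(1 + t)⁻¹) • heq + hinv • (y - z)

lemma smul_add_smul_mem_iri {Ω : Set X} (hΩ : Convex ℝ Ω) {x z : X} (hx : x ∈ iri Ω)
    (hz : z ∈ Ω) {l : ℝ} (hl₀ : 0 < l) (hl₁ : l ≤ 1) :
    l • x + (1 - l) • z ∈ iri Ω := by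
  obtain ⟨hxΩ, L, hL⟩ := hx
  have hx' : l • x + (1 - l) • z ∈ Ω := hΩ hxΩ hz hl₀.le (by linarith) (by ring)
  refine ⟨hx', L, subset_antisymm ?_ ?_⟩
  · exact hL ▸ coneGen_image_sub_subset_of_convex hΩ hz hl₀ hl₁
  · exact coneGen_subset_submodule (image_sub_subset_submodule (hL ▸ subset_coneGen_s18 _) hx')

lemma image_iri_subset {Y : Type*} [AddCommGroup Y] [Module ℝ Y] (f : X →ₗ[ℝ] Y) (Ω : Set X) :
    f '' iri Ω ⊆ iri (f '' Ω) := by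
  rintro _ ⟨x, ⟨hxΩ, L, hL⟩, rfl⟩
  exact ⟨mem_image_of_mem f hxΩ, L.map f, by rw [Submodule.map_coe, hL, image_coneGen_image_sub]⟩

lemma image_iri_eq {Y : Type*} [AddCommGroup Y] [Module ℝ Y] (f : X →ₗ[ℝ] Y) {Ω : Set X}
    (hΩ : Convex ℝ Ω) (hne : (iri Ω).Nonempty) :
    f '' iri Ω = iri (f '' Ω) := by
  obtain ⟨x, hx⟩ := hne
  refine (image_iri_subset f Ω).antisymm fun y hy => ?_
  obtain ⟨l, hl₀, hl₁, _, ⟨z, hz, rfl⟩, rfl⟩ :=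
    exists_eq_smul_add_smul_of_mem_iri hy (mem_image_of_mem f hx.1)
  exact ⟨_, smul_add_smul_mem_iri hΩ hx hz hl₀ hl₁, by simp⟩

end Iri

section Qri

variable {X Y : Type*} [AddCommGroup X] [Module ℝ X] [TopologicalSpace X]

lemma smul_add_smul_mem_qri {Ω : Set X} (hΩ : Convex ℝ Ω) {x z : X} (hx : x ∈ qri Ω)
    (hz : z ∈ Ω) {l : ℝ} (hl₀ : 0 < l) (hl₁ : l ≤ 1) :
    l • x + (1 - l) • z ∈ qri Ω := by
  obtain ⟨hxΩ, L, hL⟩ := hx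
  have hx' : l • x + (1 - l) • z ∈ Ω := hΩ hxΩ hz hl₀.le (by linarith) (by ring)
  have hLclosed : IsClosed (L : Set X) := hL ▸ isClosed_closure
  refine ⟨hx', L, subset_antisymm ?_ ?_⟩
  · exact hL ▸ closure_mono (coneGen_image_sub_subset_of_convex hΩ hz hl₀ hl₁)
  · refine closure_minimal (coneGen_subset_submodule (image_sub_subset_submodule (x := x) ?_ hx'))
      hLclosed
    exact hL ▸ (subset_coneGen_s18 _).trans subset_closure

variable [AddCommGroup Y] [Module ℝ Y] [TopologicalSpace Y]
  [ContinuousAdd Y] [ContinuousConstSMul ℝ Y]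

lemma image_qri_subset (f : X →L[ℝ] Y) (Ω : Set X) : f '' qri Ω ⊆ qri (f '' Ω) := by
  rintro _ ⟨x, ⟨hxΩ, L, hL⟩, rfl⟩
  refine ⟨mem_image_of_mem f hxΩ, (L.map (f : X →ₗ[ℝ] Y)).topologicalClosure, ?_⟩
  rw [Submodule.topologicalClosure_coe, Submodule.map_coe, ContinuousLinearMap.coe_coe, hL,
    closure_image_closure f.continuous]
  exact congrArg closure (image_coneGen_image_sub (f : X →ₗ[ℝ] Y) Ω x)

lemma image_qri_eq_of_quasiRegular (f : X →L[ℝ] Y) {Ω : Set X} (hΩ : Convex ℝ Ω)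
    (hne : (qri Ω).Nonempty) (hreg : QuasiRegular (f '' Ω)) :
    f '' qri Ω = qri (f '' Ω) := by
  obtain ⟨x, hx⟩ := hne
  refine (image_qri_subset f Ω).antisymm fun y hy => ?_
  obtain ⟨l, hl₀, hl₁, _, ⟨z, hz, rfl⟩, rfl⟩ :=
    exists_eq_smul_add_smul_of_mem_iri (hreg ▸ hy) (mem_image_of_mem f hx.1)
  exact ⟨_, smul_add_smul_mem_qri hΩ hx hz hl₀ hl₁, by simp⟩

end Qri

theorem image_iri_qri_general {X Y : Type*} [AddCommGroup X] [Module ℝ X]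
    [TopologicalSpace X]
    [AddCommGroup Y] [Module ℝ Y]
    [TopologicalSpace Y] [IsTopologicalAddGroup Y] [ContinuousSMul ℝ Y]
    (A : X →L[ℝ] Y) (Ω : Set X) (hconv : Convex ℝ Ω) :
    (A '' iri Ω ⊆ iri (A '' Ω) ∧ A '' qri Ω ⊆ qri (A '' Ω)) ∧
    ((iri Ω).Nonempty → A '' iri Ω = iri (A '' Ω)) ∧
    ((qri Ω).Nonempty → QuasiRegular (A '' Ω) → A '' qri Ω = qri (A '' Ω)) :=
  ⟨⟨image_iri_subset (A : X →ₗ[ℝ] Y) Ω, image_qri_subset A Ω⟩,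
    image_iri_eq (A : X →ₗ[ℝ] Y) hconv, image_qri_eq_of_quasiRegular A hconv⟩

/-- behavior of intrinsic relative and quasi-relative interiors
under continuous linear images. -/
theorem image_iri_qri {X Y : Type*} [AddCommGroup X] [Module ℝ X]
    [TopologicalSpace X] [IsTopologicalAddGroup X] [ContinuousSMul ℝ X]
    [LocallyConvexSpace ℝ X]
    [AddCommGroup Y] [Module ℝ Y]
    [TopologicalSpace Y] [IsTopologicalAddGroup Y] [ContinuousSMul ℝ Y]
    [LocallyConvexSpace ℝ Y]
    (A : X →L[ℝ] Y) (Ω : Set X) (hconv : Convex ℝ Ω) :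
    (A '' iri Ω ⊆ iri (A '' Ω) ∧ A '' qri Ω ⊆ qri (A '' Ω)) ∧
    ((iri Ω).Nonempty → A '' iri Ω = iri (A '' Ω)) ∧
    ((qri Ω).Nonempty → QuasiRegular (A '' Ω) → A '' qri Ω = qri (A '' Ω)) :=
  image_iri_qri_general A Ω hconv
end
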